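/- arXiv:2206.07590 — 5 statements merged into one kernel-verified Lean document; each statement's English description precedes it below -/
import Mathlib

section
/- For every integer n ≥ 0 and every x, Q_{2n}(x) = (-1)^n + Σ_{k=0}^{n-1} C(2n, 2k+1) (-1)^k P_{2n-2k-1}(x), where C(m,j) denotes the binomial coefficient. -/
/-! With `x = tan θ` the operator `D = (1 + X²) d/dX` is `d/dθ`, so `P n = Dⁿ X`.
If `a² = -1`, then `D (X + a) = 1 + X² = (X + a) (X - a)`, hence multiplication by `X + a`
turns the recursion `Q (n+1) = (D + X) (Q n)` into `D + a`: `(X + a) Q n = (D + a)ⁿ (X + a)`.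
Expanding `(D + a)ⁿ` binomially with `a = i` and taking imaginary parts at a rational point
expresses `Q n` through the `P k`; for even `n` only odd powers of `i` survive in the sum. -/

open Polynomial Finset

/-- The derivative polynomials for tangent: `P 0 = X`,
`P (n+1) = (1 + X^2) * (P n)'`. -/
noncomputable def P : ℕ → Polynomial ℚ
  | 0 => X
  | n + 1 => (1 + X ^ 2) * derivative (P n)

/-- The derivative polynomials for secant: `Q 0 = 1`,
`Q (n+1) = (1 + X^2) * (Q n)' + X * Q n`. -/
noncomputable def Q : ℕ → Polynomial ℚ
  | 0 => 1
  | n + 1 => (1 + X ^ 2) * derivative (Q n) + X * Q n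

section
variable {A : Type*} [CommRing A]

noncomputable def tanDeriv : Module.End A A[X] := LinearMap.mulLeft A (1 + X ^ 2) ∘ₗ derivative

theorem tanDeriv_apply (p : A[X]) : tanDeriv p = (1 + X ^ 2) * derivative p := rfl

theorem map_P_eq_tanDeriv_pow (f : ℚ →+* A) (n : ℕ) : (P n).map f = (tanDeriv ^ n) X := by
  induction n with
  | zero => simp [P]
  | succ n ih =>
    rw [pow_succ', Module.End.mul_apply, ← ih, tanDeriv_apply, P, Polynomial.map_mul,
      derivative_map]
    simp

theorem tanDeriv_add_smul_one_apply (a : A) (p : A[X]) :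
    (tanDeriv + a • 1 : Module.End A A[X]) p = (1 + X ^ 2) * derivative p + C a * p := by
  simp [tanDeriv_apply, smul_eq_C_mul]

theorem tanDeriv_add_smul_one_pow_C (a c : A) (n : ℕ) :
    ((tanDeriv + a • 1 : Module.End A A[X]) ^ n) (C c) = C (a ^ n * c) := by
  induction n with
  | zero => simp
  | succ n ih =>
    rw [pow_succ', Module.End.mul_apply, ih, tanDeriv_add_smul_one_apply, derivative_C, mul_zero,
      zero_add, ← C_mul, ← mul_assoc, ← pow_succ']

theorem tanDeriv_add_smul_one_pow_apply (a : A) (n : ℕ) (p : A[X]) :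
    ((tanDeriv + a • 1 : Module.End A A[X]) ^ n) p =
      ∑ j ∈ range (n + 1), C (n.choose j * a ^ j) * (tanDeriv ^ (n - j)) p := by
  rw [add_comm, (Commute.smul_left (Commute.one_left tanDeriv) a).add_pow, LinearMap.sum_apply]
  refine sum_congr rfl fun j _ => ?_
  rw [Module.End.mul_apply, Module.End.mul_apply, Module.End.natCast_apply, map_nsmul,
    _root_.smul_pow, one_pow, LinearMap.smul_apply, Module.End.one_apply, smul_eq_C_mul,
    nsmul_eq_mul, C_mul, C_pow, map_natCast]
  ring

theorem X_add_C_mul_map_Q_succ {a : A} (ha : a ^ 2 = -1) (f : ℚ →+* A) (n : ℕ) :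
    (X + C a) * (Q (n + 1)).map f =
      (tanDeriv + a • 1 : Module.End A A[X]) ((X + C a) * (Q n).map f) := by
  have hCa : C a ^ 2 = -1 := by rw [← C_pow, ha, C_neg, C_1]
  simp only [Q, Polynomial.map_add, Polynomial.map_mul, Polynomial.map_pow, map_X,
    Polynomial.map_one, derivative_map, tanDeriv_add_smul_one_apply, derivative_mul, derivative_add,
    derivative_X, derivative_C]
  linear_combination (-(Q n).map f) * hCa

theorem X_add_C_mul_map_Q {a : A} (ha : a ^ 2 = -1) (f : ℚ →+* A) (n : ℕ) :
    (X + C a) * (Q n).map f = ((tanDeriv + a • 1 : Module.End A A[X]) ^ n) (X + C a) := by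
  induction n with
  | zero => simp [Q]
  | succ n ih => rw [X_add_C_mul_map_Q_succ ha, ih, pow_succ', Module.End.mul_apply]

theorem X_add_C_mul_map_Q_eq_sum {a : A} (ha : a ^ 2 = -1) (f : ℚ →+* A) (n : ℕ) :
    (X + C a) * (Q n).map f =
      ∑ j ∈ range (n + 1), C (n.choose j * a ^ j) * (P (n - j)).map f + C (a ^ (n + 1)) := by
  rw [X_add_C_mul_map_Q ha, map_add, tanDeriv_add_smul_one_pow_C, tanDeriv_add_smul_one_pow_apply,
    ← pow_succ]
  simp only [map_P_eq_tanDeriv_pow]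

end

theorem im_I_pow_two_mul (k : ℕ) : (Complex.I ^ (2 * k)).im = 0 := by
  rw [pow_mul, Complex.I_sq, ← Complex.ofReal_one, ← Complex.ofReal_neg, ← Complex.ofReal_pow,
    Complex.ofReal_im]

theorem im_I_pow_two_mul_add_one (k : ℕ) : (Complex.I ^ (2 * k + 1)).im = (-1) ^ k := by
  rw [pow_succ, pow_mul, Complex.I_sq, ← Complex.ofReal_one, ← Complex.ofReal_neg,
    ← Complex.ofReal_pow, Complex.im_ofReal_mul, Complex.I_im, mul_one]

theorem Q_eval_eq_sum_im_I_pow (n : ℕ) (x : ℚ) :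
    (((Q n).eval x : ℚ) : ℝ) =
      ∑ j ∈ range (n + 1),
          n.choose j * (Complex.I ^ j).im * (((P (n - j)).eval x : ℚ) : ℝ) +
        (Complex.I ^ (n + 1)).im := by
  have h := congrArg (fun p => (p.eval (Rat.castHom ℂ x)).im)
    (X_add_C_mul_map_Q_eq_sum Complex.I_sq (Rat.castHom ℂ) n)
  simp only [eval_add, eval_mul, eval_finsetSum, eval_map_apply, eval_X, eval_C] at h
  simpa [Complex.im_sum] using h

theorem sum_range_two_mul_add_one_eq_sum_odd {M : Type*} [AddCommMonoid M] (f : ℕ → M)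
    (hf : ∀ k, f (2 * k) = 0) (n : ℕ) :
    ∑ j ∈ range (2 * n + 1), f j = ∑ k ∈ range n, f (2 * k + 1) := by
  induction n with
  | zero => simp [hf 0]
  | succ n ih =>
    rw [show 2 * (n + 1) + 1 = 2 * n + 1 + 1 + 1 by ring, sum_range_succ, sum_range_succ, ih,
      sum_range_succ, show 2 * n + 1 + 1 = 2 * (n + 1) by ring, hf, add_zero]

theorem Q_even_eq_sum_P (n : ℕ) (x : ℚ) :
    (Q (2 * n)).eval x =
      (-1) ^ n + ∑ k ∈ Finset.range n,
        ((2 * n).choose (2 * k + 1) : ℚ) * (-1) ^ k * (P (2 * n - 2 * k - 1)).eval x := by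
  have h := Q_eval_eq_sum_im_I_pow (2 * n) x
  rw [sum_range_two_mul_add_one_eq_sum_odd _ fun k => by rw [im_I_pow_two_mul, mul_zero, zero_mul]]
    at h
  simp only [im_I_pow_two_mul_add_one, Nat.sub_sub] at h ⊢
  rw [add_comm]
  exact_mod_cast h
end

section
/- For every integer n ≥ 0 and every x, Q_{2n+1}(x) = Σ_{k=0}^{n} C(2n+1, 2k+1) (-1)^k P_{2n-2k}(x), where C(m,j) denotes the binomial coefficient. -/
/-!
With `x = tan θ`, one has `P n (tan θ) = tan⁽ⁿ⁾ θ` and `Q n (tan θ) · sec θ = sec⁽ⁿ⁾ θ`.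
Expanding `cos θ = cos ((θ + t) - t)` and `sin θ = sin ((θ + t) - t)` gives
`cos θ / cos (θ + t) = cos t + sin t · tan (θ + t)` and
`sin θ / cos (θ + t) = cos t · tan (θ + t) - sin t`; taking `dⁿ/dtⁿ` at `t = 0` by Leibniz' rule
expresses `Q n` and `X * Q n` as binomial convolutions of the Taylor coefficients of `sin`, `cos`
with `P`. These two identities are proved together by induction on `n`, purely algebraically;
for odd `n` the first one is the theorem.
-/

open Polynomial Finset

theorem Finset.sum_range_two_mul {M : Type*} [AddCommMonoid M] (f : ℕ → M) (n : ℕ) :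
    ∑ i ∈ range (2 * n), f i = ∑ k ∈ range n, (f (2 * k) + f (2 * k + 1)) := by
  induction n with
  | zero => simp
  | succ n ih =>
    rw [mul_add, mul_one, sum_range_succ, sum_range_succ, sum_range_succ, ih, add_assoc]

section BinomConv

variable {R M : Type*} [Semiring R] [AddCommMonoid M] [Module R M]

/-- `∑ᵢ (m choose i) aᵢ p_{m-i}`: the `m`-th derivative of `a · p` by Leibniz' rule, when `a` and
`p` list the successive derivatives of two functions. -/
def binomConv (a : ℕ → R) (p : ℕ → M) (m : ℕ) : M :=
  ∑ i ∈ range (m + 1), m.choose i • a i • p (m - i)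

theorem binomConv_succ (a : ℕ → R) {p : ℕ → M} (T : M →ₗ[R] M) (hp : ∀ n, p (n + 1) = T (p n))
    (m : ℕ) :
    binomConv a p (m + 1) = T (binomConv a p m) + binomConv (fun i ↦ a (i + 1)) p m := by
  rw [binomConv, sum_choose_succ_nsmul (fun i j ↦ a i • p j), binomConv, map_sum]
  congr 1
  refine sum_congr rfl fun i hi ↦ ?_
  rw [Nat.sub_add_comm (Nat.lt_succ_iff.mp (mem_range.mp hi)), hp, map_nsmul, map_smul]

end BinomConv

/-- Taylor coefficients of `sin` at `0`. -/
def sinCoeff (j : ℕ) : ℚ := if Even j then 0 else (-1) ^ (j / 2)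

/-- Taylor coefficients of `cos` at `0`. -/
def cosCoeff (j : ℕ) : ℚ := if Even j then (-1) ^ (j / 2) else 0

@[simp] theorem sinCoeff_two_mul (k : ℕ) : sinCoeff (2 * k) = 0 := by
  simp [sinCoeff]

@[simp] theorem sinCoeff_two_mul_add_one (k : ℕ) : sinCoeff (2 * k + 1) = (-1) ^ k := by
  simp [sinCoeff, Nat.mul_add_div]

theorem sinCoeff_succ (j : ℕ) : sinCoeff (j + 1) = cosCoeff j := by
  obtain ⟨k, rfl | rfl⟩ := Nat.even_or_odd' j
  · simp [cosCoeff]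
  · simp [sinCoeff, cosCoeff, show 2 * k + 1 + 1 = 2 * (k + 1) by ring]

theorem cosCoeff_succ (j : ℕ) : cosCoeff (j + 1) = -sinCoeff j := by
  obtain ⟨k, rfl | rfl⟩ := Nat.even_or_odd' j
  · simp [cosCoeff]
  · simp [cosCoeff, show 2 * k + 1 + 1 = 2 * (k + 1) by ring, pow_succ]

noncomputable def tanDerivation : ℚ[X] →ₗ[ℚ] ℚ[X] :=
  LinearMap.mulLeft ℚ (1 + X ^ 2) ∘ₗ derivative

theorem tanDerivation_apply (p : ℚ[X]) : tanDerivation p = (1 + X ^ 2) * derivative p := rfl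

theorem P_succ (n : ℕ) : P (n + 1) = tanDerivation (P n) := rfl

theorem Q_succ (n : ℕ) : Q (n + 1) = (1 + X ^ 2) * derivative (Q n) + X * Q n := rfl

theorem binomConv_sinCoeff_succ (m : ℕ) :
    binomConv sinCoeff P (m + 1) =
      tanDerivation (binomConv sinCoeff P m) + binomConv cosCoeff P m := by
  rw [binomConv_succ _ _ P_succ, funext sinCoeff_succ]

theorem binomConv_cosCoeff_succ (m : ℕ) :
    binomConv cosCoeff P (m + 1) =
      tanDerivation (binomConv cosCoeff P m) - binomConv sinCoeff P m := by
  rw [binomConv_succ _ _ P_succ, funext cosCoeff_succ, sub_eq_add_neg]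
  simp [binomConv]

theorem Q_eq_binomConv_sinCoeff_and_X_mul_Q_eq_binomConv_cosCoeff (m : ℕ) :
    Q m = binomConv sinCoeff P m + C (cosCoeff m) ∧
      X * Q m = binomConv cosCoeff P m - C (sinCoeff m) := by
  induction m with
  | zero => simp [binomConv, sinCoeff, cosCoeff, Q, P]
  | succ m ih =>
    obtain ⟨hsin, hcos⟩ := ih
    rw [binomConv_sinCoeff_succ, binomConv_cosCoeff_succ, sinCoeff_succ, cosCoeff_succ,
      tanDerivation_apply, tanDerivation_apply, eq_sub_of_add_eq hsin.symm,
      eq_add_of_sub_eq hcos.symm, Q_succ]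
    constructor
    · simp only [derivative_sub, derivative_C, map_neg]
      ring
    · simp only [derivative_add, derivative_mul, derivative_X, derivative_C]
      ring

theorem Q_odd_eq_sum_P (n : ℕ) (x : ℚ) :
    (Q (2 * n + 1)).eval x =
      ∑ k ∈ Finset.range (n + 1),
        ((2 * n + 1).choose (2 * k + 1) : ℚ) * (-1) ^ k * (P (2 * n - 2 * k)).eval x := by
  have hcos : cosCoeff (2 * n + 1) = 0 := by rw [cosCoeff_succ, sinCoeff_two_mul, neg_zero]
  rw [(Q_eq_binomConv_sinCoeff_and_X_mul_Q_eq_binomConv_cosCoeff _).1, hcos, C_0, add_zero,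
    binomConv, show 2 * n + 1 + 1 = 2 * (n + 1) by ring, sum_range_two_mul, eval_finsetSum]
  refine sum_congr rfl fun k _ ↦ ?_
  rw [sinCoeff_two_mul, sinCoeff_two_mul_add_one, zero_smul, smul_zero, zero_add,
    Nat.add_sub_add_right, eval_smul, eval_smul, nsmul_eq_mul, smul_eq_mul]
  ring
end

section
/- For every integer m ≥ 0, Σ_{k=0}^{m} C(2m, 2k) (-1)^k 2^{2m-2k} E_{2m-2k} − Σ_{k=0}^{m-1} C(2m, 2k+1) (-1)^k 2^{2m-2k-1} E_{2m-2k-1} = (-1)^m, where C(m,j) denotes the binomial coefficient. -/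
open Polynomial Finset

/-- The Euler numbers: `E (2j) = Q (2j) (0)` (secant numbers) and
`E (2j+1) = P (2j+1) (0)` (tangent numbers). -/
noncomputable def E (n : ℕ) : ℚ := if Even n then (Q n).eval 0 else (P n).eval 0

/-! With `t = tan x` one has `tan⁽ⁿ⁾ x = P n t` and `sec⁽ⁿ⁾ x = Q n t · sec x`, so `E n` is the
`n`-th Taylor coefficient of `sec + tan` at `0`, and `T(x) = ∑ 2ⁿ Eₙ xⁿ / n!` is
`sec 2x + tan 2x = tan (x + π/4)`. The product rule in the variable `t` yields
`tan' = sec²` and `sec' = sec · tan` for the exponential generating functions of `P n 0` and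
`Q n 0`, hence `sec² - tan² = 1` and `T' = 1 + T²`. Then `(cos x - sin x) T(x) - (cos x + sin x)`
satisfies the linear equation `y' = T y` with `y(0) = 0`, so it vanishes, and the identity is
the coefficient of `x^(2m)` in `(cos x - sin x) T(x) = cos x + sin x`. -/

open scoped Nat

theorem Finset.sum_range_two_mul_add_one {M : Type*} [AddCommMonoid M] (f : ℕ → M) (m : ℕ) :
    ∑ i ∈ range (2 * m + 1), f i =
      ∑ k ∈ range (m + 1), f (2 * k) + ∑ k ∈ range m, f (2 * k + 1) := by
  induction m with
  | zero => simp
  | succ m ih =>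
    rw [show 2 * (m + 1) + 1 = 2 * m + 1 + 1 + 1 by ring, sum_range_succ, sum_range_succ, ih,
      sum_range_succ (fun k => f (2 * k)) (m + 1), sum_range_succ (fun k => f (2 * k + 1)) m,
      show 2 * (m + 1) = 2 * m + 1 + 1 by ring]
    abel

section NegOnePowChooseTwo

variable {R : Type*} [Monoid R] [HasDistribNeg R]

theorem neg_one_pow_choose_two_add_two (n : ℕ) :
    (-1 : R) ^ ((n + 2).choose 2) = -(-1) ^ (n.choose 2) := by
  have : (n + 2).choose 2 = n.choose 2 + 2 * n + 1 := by
    simp only [Nat.choose_succ_succ, Nat.choose_zero_right, Nat.choose_one_right]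
    ring
  rw [this, pow_succ, pow_add, pow_mul]
  simp

theorem neg_one_pow_choose_two_two_mul (m : ℕ) : (-1 : R) ^ ((2 * m).choose 2) = (-1) ^ m := by
  induction m with
  | zero => simp
  | succ m ih => rw [mul_add_one, neg_one_pow_choose_two_add_two, ih, pow_succ, mul_neg_one]

theorem neg_one_pow_choose_two_two_mul_add_one (m : ℕ) :
    (-1 : R) ^ ((2 * m + 1).choose 2) = (-1) ^ m := by
  induction m with
  | zero => simp
  | succ m ih =>
    rw [mul_add_one, add_right_comm, neg_one_pow_choose_two_add_two, ih, pow_succ, mul_neg_one]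

end NegOnePowChooseTwo

section ExponentialGeneratingFunction

variable {K : Type*} [Field K]

noncomputable def egf : (ℕ → K) →ₗ[K] PowerSeries K where
  toFun a := PowerSeries.mk fun n => a n / (n ! : K)
  map_add' a b := by ext; simp [add_div]
  map_smul' r a := by ext; simp [mul_div_assoc]

@[simp]
theorem coeff_egf (a : ℕ → K) (n : ℕ) : PowerSeries.coeff n (egf a) = a n / n ! :=
  PowerSeries.coeff_mk n fun n => a n / (n ! : K)

@[simp]
theorem constantCoeff_egf (a : ℕ → K) : PowerSeries.constantCoeff (egf a) = a 0 := by
  simp [← PowerSeries.coeff_zero_eq_constantCoeff_apply]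

theorem rescale_egf (r : K) (a : ℕ → K) :
    PowerSeries.rescale r (egf a) = egf fun n => r ^ n * a n := by
  ext n
  simp [PowerSeries.coeff_rescale, mul_div_assoc]

theorem egf_injective [CharZero K] : Function.Injective (egf : (ℕ → K) → PowerSeries K) :=
  fun a b h => funext fun n => by
    simpa [Nat.factorial_ne_zero] using congrArg (PowerSeries.coeff n) h

theorem derivative_egf [CharZero K] (a : ℕ → K) :
    PowerSeries.derivative K (egf a) = egf fun n => a (n + 1) := by
  ext n
  rw [PowerSeries.coeff_derivative, coeff_egf, coeff_egf, Nat.factorial_succ, Nat.cast_mul]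
  field_simp
  push_cast
  ring

theorem egf_mul [CharZero K] (a b : ℕ → K) :
    egf a * egf b = egf fun n => ∑ i ∈ range (n + 1), n.choose i • (a i * b (n - i)) := by
  ext n
  rw [PowerSeries.coeff_mul, Nat.sum_antidiagonal_eq_sum_range_succ_mk, coeff_egf, sum_div]
  refine sum_congr rfl fun i hi => ?_
  have hin : i ≤ n := Nat.lt_succ_iff.mp (mem_range.mp hi)
  have hfac : (n.choose i * i ! * (n - i)! : K) = n ! := by
    exact_mod_cast Nat.choose_mul_factorial_mul_factorial hin
  have hchoose : (n.choose i : K) ≠ 0 := by exact_mod_cast (Nat.choose_pos hin).ne'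
  rw [coeff_egf, coeff_egf, nsmul_eq_mul, ← hfac]
  field_simp

end ExponentialGeneratingFunction

theorem PowerSeries.derivative_rescale {R : Type*} [CommSemiring R] (r : R) (f : PowerSeries R) :
    derivative R (rescale r f) = r • rescale r (derivative R f) := by
  ext n
  simp only [coeff_derivative, coeff_rescale, coeff_smul, smul_eq_mul, pow_succ]
  ring

theorem PowerSeries.eq_zero_of_derivative_eq_mul {R : Type*} [CommRing R] [IsAddTorsionFree R]
    {a f : PowerSeries R} (hf : derivative R f = a * f) (hf0 : constantCoeff f = 0) : f = 0 := by
  ext n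
  rw [map_zero]
  induction n using Nat.strong_induction_on with
  | _ n ih =>
    rcases n with _ | n
    · simpa using hf0
    · have hcoeff := congrArg (coeff n) hf
      rw [coeff_derivative, coeff_mul, sum_eq_zero fun p hp => by
        rw [ih p.2 (by have := mem_antidiagonal.mp hp; omega), mul_zero]] at hcoeff
      exact (nsmul_eq_zero_iff_right n.succ_ne_zero).mp
        (by rw [nsmul_eq_mul']; exact_mod_cast hcoeff)

section TwistedDerivative

variable {R : Type*} [CommRing R]

/-- If `f` is a polynomial in `t = tan x`, then `d/dx (f(tan x) · secᶜ x)` is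
`(twistedDeriv c f)(tan x) · secᶜ x`. -/
noncomputable def twistedDeriv (c : R) : R[X] →ₗ[R] R[X] :=
  LinearMap.mulLeft R (1 + X ^ 2) ∘ₗ derivative + LinearMap.mulLeft R (C c * X)

theorem twistedDeriv_apply (c : R) (f : R[X]) :
    twistedDeriv c f = (1 + X ^ 2) * derivative f + C c * X * f := rfl

theorem twistedDeriv_mul (a b : R) (f g : R[X]) :
    twistedDeriv (a + b) (f * g) = twistedDeriv a f * g + f * twistedDeriv b g := by
  simp only [twistedDeriv_apply, derivative_mul, C_add]
  ring

theorem iterate_twistedDeriv_mul (a b : R) (f g : R[X]) (n : ℕ) :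
    (twistedDeriv (a + b))^[n] (f * g) =
      ∑ i ∈ range (n + 1), n.choose i • ((twistedDeriv a)^[i] f * (twistedDeriv b)^[n - i] g) := by
  induction n with
  | zero => simp
  | succ n ih =>
    rw [Function.iterate_succ_apply', ih, map_sum, sum_choose_succ_nsmul
      (fun i j => (twistedDeriv a)^[i] f * (twistedDeriv b)^[j] g), ← sum_add_distrib]
    refine sum_congr rfl fun i hi => ?_
    rw [Nat.sub_add_comm (Nat.lt_succ_iff.mp (mem_range.mp hi)), Function.iterate_succ_apply',
      Function.iterate_succ_apply', map_nsmul, twistedDeriv_mul, ← nsmul_add, add_comm]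

theorem twistedDeriv_zero_one_add_X_sq_mul (f : R[X]) :
    twistedDeriv 0 ((1 + X ^ 2) * f) = (1 + X ^ 2) * twistedDeriv 2 f := by
  simp only [twistedDeriv_apply, derivative_mul, derivative_add, derivative_one,
    derivative_X_pow, map_zero, Nat.cast_ofNat, map_ofNat]
  ring

end TwistedDerivative

theorem P_eq_iterate (n : ℕ) : P n = (twistedDeriv 0)^[n] X := by
  induction n with
  | zero => rfl
  | succ n ih => rw [Function.iterate_succ_apply', ← ih, twistedDeriv_apply, P]; simp

theorem Q_eq_iterate (n : ℕ) : Q n = (twistedDeriv 1)^[n] 1 := by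
  induction n with
  | zero => rfl
  | succ n ih => rw [Function.iterate_succ_apply', ← ih, twistedDeriv_apply, Q, C_1, one_mul]

theorem P_succ_s5 (n : ℕ) :
    P (n + 1) = (1 + X ^ 2) * ∑ i ∈ range (n + 1), n.choose i • (Q i * Q (n - i)) := by
  have hsemiconj : Function.Semiconj ((1 + X ^ 2) * ·) (twistedDeriv (2 : ℚ)) (twistedDeriv 0) :=
    fun f => (twistedDeriv_zero_one_add_X_sq_mul f).symm
  have hP1 : twistedDeriv 0 X = (1 + X ^ 2) * (1 * 1 : ℚ[X]) := by simp [twistedDeriv_apply]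
  simp only [Q_eq_iterate]
  rw [P_eq_iterate, Function.iterate_succ_apply, hP1, ← (hsemiconj.iterate_right n).eq,
    show (2 : ℚ) = 1 + 1 by norm_num, iterate_twistedDeriv_mul]

theorem Q_succ_s5 (n : ℕ) : Q (n + 1) = ∑ i ∈ range (n + 1), n.choose i • (Q i * P (n - i)) := by
  have hQ1 : twistedDeriv 1 1 = (1 * X : ℚ[X]) := by simp [twistedDeriv_apply]
  simp only [Q_eq_iterate, P_eq_iterate]
  rw [Function.iterate_succ_apply, hQ1, ← iterate_twistedDeriv_mul, add_zero]

theorem derivative_comp_neg_X {R : Type*} [CommRing R] (p : R[X]) :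
    (derivative p).comp (-X) = -derivative (p.comp (-X)) := by
  simp [derivative_comp]

theorem eval_zero_eq_zero_of_comp_neg_X {R : Type*} [CommRing R] [IsAddTorsionFree R] {p : R[X]}
    (h : p.comp (-X) = -p) : p.eval 0 = 0 :=
  self_eq_neg.mp (by simpa using congrArg (eval 0) h)

theorem P_comp_neg_X (n : ℕ) : (P n).comp (-X) = (-1) ^ (n + 1) • P n := by
  induction n with
  | zero => simp [P]
  | succ n ih =>
    simp only [P, mul_comp, derivative_comp_neg_X, ih, derivative_smul, add_comp, one_comp,
      pow_comp, X_comp]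
    ring

theorem Q_comp_neg_X (n : ℕ) : (Q n).comp (-X) = (-1) ^ n • Q n := by
  induction n with
  | zero => simp [Q]
  | succ n ih =>
    simp only [Q, add_comp, mul_comp, derivative_comp_neg_X, ih, derivative_smul, one_comp,
      pow_comp, X_comp]
    ring

theorem E_eq_eval_P_add_eval_Q (n : ℕ) : E n = (P n).eval 0 + (Q n).eval 0 := by
  rcases Nat.even_or_odd n with hn | hn
  · have hP : (P n).eval 0 = 0 := eval_zero_eq_zero_of_comp_neg_X <| by
      rw [P_comp_neg_X, pow_succ, hn.neg_one_pow, one_mul, neg_one_smul]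
    rw [E, if_pos hn, hP, zero_add]
  · have hQ : (Q n).eval 0 = 0 := eval_zero_eq_zero_of_comp_neg_X <| by
      rw [Q_comp_neg_X, hn.neg_one_pow, neg_one_smul]
    rw [E, if_neg (Nat.not_even_iff_odd.mpr hn), hQ, add_zero]

noncomputable def tanSeries : PowerSeries ℚ := egf fun n => (P n).eval 0

noncomputable def secSeries : PowerSeries ℚ := egf fun n => (Q n).eval 0

theorem derivative_tanSeries : PowerSeries.derivative ℚ tanSeries = secSeries ^ 2 := by
  rw [tanSeries, secSeries, derivative_egf, sq, egf_mul]
  congr 1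
  funext n
  simp [P_succ_s5, eval_finsetSum]

theorem derivative_secSeries : PowerSeries.derivative ℚ secSeries = secSeries * tanSeries := by
  rw [tanSeries, secSeries, derivative_egf, egf_mul]
  congr 1
  funext n
  simp [Q_succ_s5, eval_finsetSum]

theorem secSeries_sq_sub_tanSeries_sq : secSeries ^ 2 - tanSeries ^ 2 = 1 := by
  refine PowerSeries.derivative.ext ?_ ?_
  · rw [map_sub, PowerSeries.derivative_pow, PowerSeries.derivative_pow, derivative_secSeries,
      derivative_tanSeries, PowerSeries.derivative_one]
    ring
  · simp [secSeries, tanSeries, P, Q]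

noncomputable def eulerSeries : PowerSeries ℚ := egf fun n => 2 ^ n * E n

theorem eulerSeries_eq_rescale : eulerSeries = PowerSeries.rescale 2 (tanSeries + secSeries) := by
  simp only [eulerSeries, tanSeries, secSeries, ← map_add, rescale_egf, E_eq_eval_P_add_eval_Q]
  rfl

theorem derivative_eulerSeries : PowerSeries.derivative ℚ eulerSeries = 1 + eulerSeries ^ 2 := by
  have hsq := secSeries_sq_sub_tanSeries_sq
  rw [eulerSeries_eq_rescale, PowerSeries.derivative_rescale, map_add, derivative_tanSeries,
    derivative_secSeries, two_smul, ← map_add, ← map_pow, ← map_one (PowerSeries.rescale 2),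
    ← map_add]
  congr 1
  linear_combination hsq

noncomputable def cosAddSin : PowerSeries ℚ := egf fun n => (-1) ^ (n.choose 2)

noncomputable def cosSubSin : PowerSeries ℚ := egf fun n => (-1) ^ ((n + 1).choose 2)

theorem derivative_cosAddSin : PowerSeries.derivative ℚ cosAddSin = cosSubSin :=
  derivative_egf _

theorem derivative_cosSubSin : PowerSeries.derivative ℚ cosSubSin = -cosAddSin := by
  simp only [cosSubSin, cosAddSin, derivative_egf, neg_one_pow_choose_two_add_two, ← map_neg]
  rfl

theorem cosSubSin_mul_eulerSeries : cosSubSin * eulerSeries = cosAddSin := by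
  rw [← sub_eq_zero]
  refine PowerSeries.eq_zero_of_derivative_eq_mul (a := eulerSeries) ?_ ?_
  · rw [map_sub, Derivation.leibniz, derivative_cosSubSin, derivative_eulerSeries,
      derivative_cosAddSin, smul_eq_mul, smul_eq_mul]
    ring
  · simp [cosSubSin, cosAddSin, eulerSeries, E, Q]

theorem sum_choose_nsmul_neg_one_pow_mul_E (n : ℕ) :
    ∑ i ∈ range (n + 1), n.choose i • ((-1) ^ ((i + 1).choose 2) * (2 ^ (n - i) * E (n - i))) =
      (-1 : ℚ) ^ (n.choose 2) :=
  congrFun (egf_injective ((egf_mul _ _).symm.trans cosSubSin_mul_eulerSeries)) n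

theorem euler_even_alternating_identity (m : ℕ) :
    (∑ k ∈ Finset.range (m + 1),
        ((2 * m).choose (2 * k) : ℚ) * (-1) ^ k * 2 ^ (2 * m - 2 * k) * E (2 * m - 2 * k)) -
      (∑ k ∈ Finset.range m,
        ((2 * m).choose (2 * k + 1) : ℚ) * (-1) ^ k * 2 ^ (2 * m - 2 * k - 1) *
          E (2 * m - 2 * k - 1)) =
    (-1) ^ m := by
  have h := sum_choose_nsmul_neg_one_pow_mul_E (2 * m)
  rw [sum_range_two_mul_add_one, neg_one_pow_choose_two_two_mul] at h
  rw [← h, sub_eq_add_neg, ← sum_neg_distrib]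
  congr 1 <;> refine sum_congr rfl fun k _ => ?_
  · rw [neg_one_pow_choose_two_two_mul_add_one, nsmul_eq_mul]
    ring
  · rw [show 2 * k + 1 + 1 = 2 * (k + 1) by ring, neg_one_pow_choose_two_two_mul, Nat.sub_sub,
      nsmul_eq_mul]
    ring
end

section
/- For every integer n ≥ 0, E_{2n+2} = (2n+2) · E_{2n+1} − Σ_{i=0}^{n} C(2n+2, 2i+2) (-1)^{i+2} (4^{i+1} − 2) B_{2i+2} E_{2n-2i} + (-4)^{n+1} B_{2n+2}, where C(m,j) denotes the binomial coefficient and B_j denotes the j-th Bernoulli number. -/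
open Polynomial Finset

/-!
With `sec = 1 / cos` and `tan = sin / cos` as formal power series, the recurrences defining `P n`
and `Q n` say that the `n`-th derivative of `tan` is `P n (tan)` and that of `sec` is
`Q n (tan) * sec`; evaluating at `0` shows `n! [xⁿ] tan = P n (0)` and `n! [xⁿ] sec = Q n (0)`.

Substituting `x ↦ 2ix` and `x ↦ ix` into `x / (eˣ - 1) = ∑ Bₙ xⁿ / n!` shows that
`x cot x = ∑ (-4)ᵏ B₂ₖ x²ᵏ / (2k)!` satisfies `x cot x · sin x = x cos x` and
`x cot (x/2) · sin x = x (1 + cos x)`. Hence `x cot (x/2) - x cot x = x / sin x`, and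
`x / (sin x cos x) = x tan x + x cot x` becomes an identity of exponential generating functions
whose coefficient of `x²ⁿ⁺²` is the recurrence.
-/

theorem Finset.sum_range_two_mul_add_one_of_odd_eq_zero {M : Type*} [AddCommMonoid M]
    (f : ℕ → M) (hf : ∀ j, Odd j → f j = 0) (m : ℕ) :
    ∑ j ∈ range (2 * m + 1), f j = ∑ k ∈ range (m + 1), f (2 * k) := by
  induction m with
  | zero => simp
  | succ m ih =>
    rw [show 2 * (m + 1) + 1 = 2 * m + 1 + 1 + 1 by omega, sum_range_succ, sum_range_succ, ih,
      hf _ (odd_two_mul_add_one m), add_zero, sum_range_succ (n := m + 1)]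
    rfl

namespace PowerSeries

open scoped Nat

theorem factorial_mul_coeff_mul {R : Type*} [CommSemiring R] (f g : R⟦X⟧) (m : ℕ) :
    (m ! : R) * coeff m (f * g) =
      ∑ j ∈ range (m + 1),
        (m.choose j : R) * (j ! * coeff j f) * ((m - j)! * coeff (m - j) g) := by
  rw [coeff_mul, Nat.sum_antidiagonal_eq_sum_range_succ_mk, mul_sum]
  refine sum_congr rfl fun j hj => ?_
  rw [← Nat.choose_mul_factorial_mul_factorial (mem_range_succ_iff.mp hj)]
  push_cast
  ring

section SinCos

variable {A : Type*} [CommRing A] [Algebra ℚ A]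

theorem algebraMap_div_factorial_succ_mul (c : ℚ) (n : ℕ) :
    algebraMap ℚ A (c / (n + 1)!) * (n + 1) = algebraMap ℚ A (c / n !) := by
  rw [← map_natCast (algebraMap ℚ A), ← map_one (algebraMap ℚ A), ← map_add, ← map_mul]
  congr 1
  push_cast [Nat.factorial_succ]
  field_simp

@[simp]
theorem constantCoeff_sin : constantCoeff (sin A) = 0 := by
  simp [sin, ← coeff_zero_eq_constantCoeff_apply]

@[simp]
theorem constantCoeff_cos : constantCoeff (cos A) = 1 := by
  simp [cos, ← coeff_zero_eq_constantCoeff_apply]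

theorem derivative_sin : d⁄dX A (sin A) = cos A := by
  ext n
  rw [coeff_derivative]
  obtain ⟨k, rfl | rfl⟩ := Nat.even_or_odd' n
  · have hk : (2 * k + 1) / 2 = k := by omega
    simp only [sin, cos, coeff_mk, Nat.even_add_one, even_two_mul, hk, if_true, if_false, not_true]
    rw [algebraMap_div_factorial_succ_mul, Nat.mul_div_cancel_left k two_pos]
  · simp [sin, cos, Nat.even_add_one]

theorem derivative_cos : d⁄dX A (cos A) = -sin A := by
  ext n
  rw [coeff_derivative]
  obtain ⟨k, rfl | rfl⟩ := Nat.even_or_odd' n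
  · simp [sin, cos]
  · have hk : (2 * k + 1 + 1) / 2 = k + 1 := by omega
    have hk' : (2 * k + 1) / 2 = k := by omega
    simp only [sin, cos, coeff_mk, Nat.even_add_one, even_two_mul, hk, hk', if_true, if_false,
      not_true, not_false_eq_true, map_neg]
    rw [algebraMap_div_factorial_succ_mul, pow_succ, mul_neg_one, neg_div, map_neg]

theorem sin_sq_add_cos_sq [IsAddTorsionFree A] : sin A ^ 2 + cos A ^ 2 = 1 := by
  refine derivative.ext ?_ (by simp)
  simp only [map_add, derivative_pow, derivative_sin, derivative_cos, derivative_one]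
  ring

end SinCos

section TanSec

noncomputable def sec : ℚ⟦X⟧ := (cos ℚ)⁻¹

noncomputable def tan : ℚ⟦X⟧ := sin ℚ * sec

theorem cos_mul_sec : cos ℚ * sec = 1 :=
  PowerSeries.mul_inv_cancel _ (by simp)

@[simp]
theorem constantCoeff_sec : constantCoeff sec = 1 := by
  simpa using congrArg constantCoeff cos_mul_sec

@[simp]
theorem constantCoeff_tan : constantCoeff tan = 0 := by
  simp [tan]

theorem derivative_sec : d⁄dX ℚ sec = tan * sec := by
  rw [sec, derivative_inv', derivative_cos, tan, sec]
  ring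

theorem derivative_tan : d⁄dX ℚ tan = 1 + tan ^ 2 := by
  rw [tan, Derivation.leibniz, derivative_sin, derivative_sec, smul_eq_mul, smul_eq_mul, tan]
  linear_combination cos_mul_sec

theorem iterate_derivative_tan (n : ℕ) : (d⁄dX ℚ)^[n] tan = Polynomial.aeval tan (P n) := by
  induction n with
  | zero => simp [P]
  | succ n ih =>
    rw [Function.iterate_succ_apply', ih, Derivation.map_aeval, derivative_tan, P]
    simp only [map_mul, map_add, map_one, map_pow, aeval_X, smul_eq_mul]
    ring

theorem iterate_derivative_sec (n : ℕ) :
    (d⁄dX ℚ)^[n] sec = Polynomial.aeval tan (Q n) * sec := by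
  induction n with
  | zero => simp [Q]
  | succ n ih =>
    rw [Function.iterate_succ_apply', ih, Derivation.leibniz, Derivation.map_aeval, derivative_tan,
      derivative_sec, Q]
    simp only [map_mul, map_add, map_one, map_pow, aeval_X, smul_eq_mul]
    ring

theorem constantCoeff_aeval {R : Type*} [CommRing R] (f : R⟦X⟧) (p : R[X]) :
    constantCoeff (Polynomial.aeval f p) = p.eval (constantCoeff f) := by
  simp [aeval_def, hom_eval₂]

theorem factorial_mul_coeff_tan (n : ℕ) : n ! * coeff n tan = (P n).eval 0 := by
  rw [← constantCoeff_iterate_derivative, iterate_derivative_tan, constantCoeff_aeval,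
    constantCoeff_tan]

theorem factorial_mul_coeff_sec (n : ℕ) : n ! * coeff n sec = (Q n).eval 0 := by
  rw [← constantCoeff_iterate_derivative, iterate_derivative_sec, map_mul, constantCoeff_aeval,
    constantCoeff_tan, constantCoeff_sec, mul_one]

end TanSec

section Cot

open Complex (I I_mul_I I_ne_zero)

theorem rescale_bernoulliPowerSeries_mul {A : Type*} [CommRing A] [Algebra ℚ A] (a : A) :
    rescale a (bernoulliPowerSeries A) * (rescale a (exp A) - 1) = C a * X := by
  simpa [rescale_X] using congrArg (rescale a) (bernoulliPowerSeries_mul_exp_sub_one A)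

theorem rescale_I_exp : rescale I (exp ℂ) = cos ℂ + C I * sin ℂ := by
  ext n
  obtain ⟨k, rfl | rfl⟩ := Nat.even_or_odd' n
  · simp [sin, cos, coeff_rescale, pow_mul, div_eq_mul_inv]
  · have hk : (2 * k + 1) / 2 = k := by omega
    simp [sin, cos, coeff_rescale, pow_succ, pow_mul, hk, div_eq_mul_inv]
    ring

noncomputable def xCot : ℚ⟦X⟧ :=
  mk fun n => if Even n then (-4) ^ (n / 2) * _root_.bernoulli n / n ! else 0

theorem map_xCot :
    map (algebraMap ℚ ℂ) xCot = rescale (2 * I) (bernoulliPowerSeries ℂ) + C I * X := by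
  ext n
  obtain ⟨k, rfl | rfl⟩ := Nat.even_or_odd' n
  · simp [xCot, bernoulliPowerSeries, coeff_rescale, coeff_X, pow_mul, mul_pow]
    ring
  · rcases k.eq_zero_or_pos with rfl | hk
    · simp [xCot, bernoulliPowerSeries, coeff_rescale]
      ring
    · have hB : _root_.bernoulli (2 * k + 1) = 0 :=
        bernoulli_eq_zero_of_odd (odd_two_mul_add_one k) (by omega)
      simp [xCot, bernoulliPowerSeries, coeff_rescale, coeff_C, hB, hk.ne']

theorem C_I_mul_C_I : C I * C I = (-1 : ℂ⟦X⟧) := by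
  rw [← map_mul, I_mul_I, map_neg, map_one]

theorem xCot_mul_sin : xCot * sin ℚ = X * cos ℚ := by
  apply map_injective (algebraMap ℚ ℂ) (algebraMap ℚ ℂ).injective
  simp only [map_mul, map_sin, map_cos, map_X]
  have hB := rescale_bernoulliPowerSeries_mul (2 * I)
  rw [two_mul, ← exp_mul_exp_eq_exp_add, rescale_I_exp, ← two_mul,
    eq_sub_of_add_eq map_xCot.symm] at hB
  have pyth : sin ℂ ^ 2 + cos ℂ ^ 2 = 1 := PowerSeries.sin_sq_add_cos_sq
  set K := map (algebraMap ℚ ℂ) xCot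
  set i : ℂ⟦X⟧ := C I
  have h2 : C (2 * I) = 2 * i := by rw [map_mul, map_ofNat]
  -- `e^{2ix} - 1 = 2i sin x · e^{ix}`, and `e^{-ix} = cos x - i sin x` then removes `e^{ix}`
  have h : C (2 * I) * ((K - i * X) * sin ℂ * (cos ℂ + i * sin ℂ)) = C (2 * I) * X := by
    linear_combination hB + (K - i * X) * sin ℂ ^ 2 * C_I_mul_C_I - (K - i * X) * pyth
      + (K - i * X) * sin ℂ * (cos ℂ + i * sin ℂ) * h2
  have h' := mul_left_cancel₀ (by simp [I_ne_zero]) h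
  linear_combination (cos ℂ - i * sin ℂ) * h' - (K - i * X) * sin ℂ * pyth
    + (K - i * X) * sin ℂ ^ 3 * C_I_mul_C_I

theorem map_rescale_half_xCot :
    map (algebraMap ℚ ℂ) (rescale (1 / 2) xCot) =
      rescale I (bernoulliPowerSeries ℂ) + C (I / 2) * X := by
  rw [← rescale_map, map_xCot, map_add, ← rescale_X, rescale_rescale, rescale_rescale,
    rescale_X]
  have half : algebraMap ℚ ℂ (1 / 2) = 1 / 2 := by norm_num
  rw [half, show 2 * I * (1 / 2) = I by ring, mul_one_div]

theorem two_mul_rescale_half_xCot_mul_sin :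
    2 * rescale (1 / 2) xCot * sin ℚ = X * (1 + cos ℚ) := by
  apply map_injective (algebraMap ℚ ℂ) (algebraMap ℚ ℂ).injective
  simp only [map_mul, map_add, map_ofNat, map_one, map_sin, map_cos, map_X]
  have hB := rescale_bernoulliPowerSeries_mul I
  rw [rescale_I_exp, eq_sub_of_add_eq map_rescale_half_xCot.symm] at hB
  have pyth : sin ℂ ^ 2 + cos ℂ ^ 2 = 1 := PowerSeries.sin_sq_add_cos_sq
  set L := map (algebraMap ℚ ℂ) (rescale (1 / 2) xCot)
  set i : ℂ⟦X⟧ := C I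
  have h2 : 2 * C (I / 2) = i := by
    rw [← map_ofNat C 2, ← map_mul, mul_div_cancel₀ _ two_ne_zero]
  -- multiply by `e^{-ix} + 1`, using `(e^{ix} - 1) (e^{-ix} + 1) = 2i sin x`
  have h : i * (2 * L * sin ℂ) = i * (X * (1 + cos ℂ)) := by
    linear_combination (cos ℂ - i * sin ℂ + 1) * hB + (X * C (I / 2) - L) * pyth
      + (L - X * C (I / 2)) * sin ℂ ^ 2 * C_I_mul_C_I + i * sin ℂ * X * h2
  exact mul_left_cancel₀ (by simp [i, I_ne_zero]) h

end Cot

theorem sin_ne_zero : sin ℚ ≠ 0 := fun h => by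
  simpa [sin] using congrArg (coeff 1) h

theorem two_mul_rescale_half_xCot_sub_xCot_mul_sec :
    (2 * rescale (1 / 2) xCot - xCot) * sec = X * tan + xCot := by
  refine mul_left_cancel₀ sin_ne_zero ?_
  have pyth : sin ℚ ^ 2 + cos ℚ ^ 2 = 1 := sin_sq_add_cos_sq
  rw [tan]
  linear_combination sec * two_mul_rescale_half_xCot_mul_sin - (sec + 1) * xCot_mul_sin
    - X * sec * pyth + X * cos ℚ * cos_mul_sec

theorem factorial_mul_coeff_two_mul_rescale_half_xCot_sub_xCot (j : ℕ) :
    (j ! : ℚ) * coeff j (2 * rescale (1 / 2) xCot - xCot) =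
      if Even j then (2 * (-1) ^ (j / 2) - (-4) ^ (j / 2)) * _root_.bernoulli j else 0 := by
  rw [map_sub, ← map_ofNat C 2, coeff_C_mul, coeff_rescale, xCot, coeff_mk]
  obtain ⟨k, rfl | rfl⟩ := Nat.even_or_odd' j
  · have h4 : (1 / 2 : ℚ) ^ (2 * k) * (-4) ^ k = (-1) ^ k := by
      rw [pow_mul, ← mul_pow]
      norm_num
    simp only [even_two_mul, if_true, Nat.mul_div_cancel_left k two_pos]
    field_simp
    linear_combination 2 * _root_.bernoulli (2 * k) * h4
  · simp

theorem factorial_mul_coeff_X_mul_tan_add_xCot (n : ℕ) :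
    ((2 * n + 2)! : ℚ) * coeff (2 * n + 2) (X * tan + xCot) =
      (2 * n + 2) * (P (2 * n + 1)).eval 0 + (-4) ^ (n + 1) * _root_.bernoulli (2 * n + 2) := by
  have hT : ((2 * n + 2)! : ℚ) * coeff (2 * n + 1) tan =
      (2 * n + 2) * (P (2 * n + 1)).eval 0 := by
    rw [Nat.factorial_succ, Nat.cast_mul, mul_assoc, factorial_mul_coeff_tan]
    push_cast
    ring
  have hK : ((2 * n + 2)! : ℚ) * coeff (2 * n + 2) xCot =
      (-4) ^ (n + 1) * _root_.bernoulli (2 * n + 2) := by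
    have hk : (2 * n + 2) / 2 = n + 1 := by omega
    rw [xCot, coeff_mk, if_pos ⟨n + 1, by omega⟩, hk]
    field_simp
  rw [map_add, coeff_succ_X_mul, mul_add, hT, hK]

end PowerSeries

theorem E_two_mul (k : ℕ) : E (2 * k) = (Q (2 * k)).eval 0 :=
  if_pos (even_two_mul k)

theorem E_two_mul_add_one (k : ℕ) : E (2 * k + 1) = (P (2 * k + 1)).eval 0 :=
  if_neg (Nat.not_even_iff_odd.mpr (odd_two_mul_add_one k))

section

open PowerSeries
open scoped Nat

theorem sum_choose_mul_bernoulli_mul_E (n : ℕ) :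
    ∑ k ∈ range (n + 2), ((2 * n + 2).choose (2 * k) : ℚ) *
        ((2 * (-1) ^ k - (-4) ^ k) * _root_.bernoulli (2 * k)) * E (2 * n + 2 - 2 * k) =
      (2 * n + 2) * E (2 * n + 1) + (-4) ^ (n + 1) * _root_.bernoulli (2 * n + 2) := by
  have h := congrArg (fun f : PowerSeries ℚ => ((2 * n + 2)! : ℚ) * coeff (2 * n + 2) f)
    two_mul_rescale_half_xCot_sub_xCot_mul_sec
  simp only [factorial_mul_coeff_mul, factorial_mul_coeff_X_mul_tan_add_xCot,
    factorial_mul_coeff_two_mul_rescale_half_xCot_sub_xCot] at h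
  rw [E_two_mul_add_one, ← h, show 2 * n + 2 + 1 = 2 * (n + 1) + 1 by omega,
    sum_range_two_mul_add_one_of_odd_eq_zero _ fun j hj => by simp [Nat.not_even_iff_odd.mpr hj]]
  refine sum_congr rfl fun k hk => ?_
  have hk' : 2 * n + 2 - 2 * k = 2 * (n + 1 - k) := by omega
  rw [if_pos (even_two_mul k), Nat.mul_div_cancel_left k two_pos, hk', factorial_mul_coeff_sec,
    E_two_mul]

end

theorem euler_recurrence_bernoulli (n : ℕ) :
    E (2 * n + 2) =
      (2 * n + 2 : ℚ) * E (2 * n + 1) -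
        (∑ i ∈ Finset.range (n + 1),
          ((2 * n + 2).choose (2 * i + 2) : ℚ) * (-1) ^ (i + 2) * (4 ^ (i + 1) - 2) *
            _root_.bernoulli (2 * i + 2) * E (2 * n - 2 * i)) +
        (-4) ^ (n + 1) * _root_.bernoulli (2 * n + 2) := by
  have h := sum_choose_mul_bernoulli_mul_E n
  rw [sum_range_succ'] at h
  have hterm : ∀ i ∈ range (n + 1),
      ((2 * n + 2).choose (2 * (i + 1)) : ℚ) *
          ((2 * (-1) ^ (i + 1) - (-4) ^ (i + 1)) * _root_.bernoulli (2 * (i + 1))) *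
          E (2 * n + 2 - 2 * (i + 1)) =
        ((2 * n + 2).choose (2 * i + 2) : ℚ) * (-1) ^ (i + 2) * (4 ^ (i + 1) - 2) *
          _root_.bernoulli (2 * i + 2) * E (2 * n - 2 * i) := fun i _ => by
    rw [show 2 * n + 2 - 2 * (i + 1) = 2 * n - 2 * i by omega,
      show 2 * (i + 1) = 2 * i + 2 by omega, neg_pow (4 : ℚ)]
    ring
  rw [sum_congr rfl hterm] at h
  simp only [mul_zero, Nat.choose_zero_right, Nat.cast_one, pow_zero, _root_.bernoulli_zero,
    Nat.sub_zero] at h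
  linear_combination h
end

section
/- For every integer n ≥ 0, the derivative of P_n satisfies (d/dx) P_n(x) = Σ_{i=0}^{n} C(n, i) Q_i(x) Q_{n-i}(x), where C(n,i) denotes the binomial coefficient. -/
open Polynomial Finset

/-!
With `D f = ((1 + X ^ 2) * f)'`, the recurrence for `P` says `P (n + 1)' = D (P n)'`, so
`(P n)' = D^[n] 1`. On the other hand `D (Q i * Q j) = Q (i + 1) * Q j + Q i * Q (j + 1)`, i.e. `D`
raises the indices of `Q i * Q j` like a derivation, and iterating it from `1 = Q 0 * Q 0`
produces the binomial sum exactly as in the Leibniz rule.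
-/

theorem AddMonoidHom.iterate_map_eq_sum_choose_nsmul {M : Type*} [AddCommMonoid M]
    (T : M →+ M) (q : ℕ → ℕ → M) (hT : ∀ i j, T (q i j) = q (i + 1) j + q i (j + 1)) (n : ℕ) :
    T^[n] (q 0 0) = ∑ i ∈ Finset.range (n + 1), n.choose i • q i (n - i) := by
  induction n with
  | zero => simp
  | succ n ih =>
    rw [Function.iterate_succ_apply', ih, map_sum, sum_choose_succ_nsmul, ← sum_add_distrib]
    refine sum_congr rfl fun i hi => ?_
    have : n + 1 - i = n - i + 1 := by have := Finset.mem_range.mp hi; omega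
    rw [map_nsmul, hT, this, nsmul_add, add_comm (n.choose i • _)]

noncomputable def derivativeMulOneAddXSq : ℚ[X] →+ ℚ[X] :=
  derivative.toAddMonoidHom.comp (AddMonoidHom.mulLeft (1 + X ^ 2))

theorem derivativeMulOneAddXSq_apply (f : ℚ[X]) :
    derivativeMulOneAddXSq f = derivative ((1 + X ^ 2) * f) :=
  rfl

theorem derivative_P_eq_iterate (n : ℕ) : derivative (P n) = derivativeMulOneAddXSq^[n] 1 := by
  induction n with
  | zero => simp [P]
  | succ n ih => rw [Function.iterate_succ_apply', ← ih, derivativeMulOneAddXSq_apply]; rfl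

theorem derivativeMulOneAddXSq_Q_mul_Q (i j : ℕ) :
    derivativeMulOneAddXSq (Q i * Q j) = Q (i + 1) * Q j + Q i * Q (j + 1) := by
  simp only [derivativeMulOneAddXSq_apply, Q, derivative_mul, derivative_add, derivative_one,
    derivative_X_sq, C_ofNat]
  ring

theorem derivative_P_eq_sum_Q (n : ℕ) (x : ℚ) :
    (derivative (P n)).eval x =
      ∑ i ∈ Finset.range (n + 1), (n.choose i : ℚ) * (Q i).eval x * (Q (n - i)).eval x := by
  have hQ0 : Q 0 * Q 0 = 1 := by simp [Q]
  rw [derivative_P_eq_iterate, ← hQ0, derivativeMulOneAddXSq.iterate_map_eq_sum_choose_nsmul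
    (fun i j => Q i * Q j) derivativeMulOneAddXSq_Q_mul_Q, eval_finsetSum]
  refine sum_congr rfl fun i _ => ?_
  simp only [nsmul_eq_mul, eval_mul, eval_natCast, mul_assoc]
end
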